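/- arXiv:1508.03613 — 4 statements merged into one kernel-verified Lean document; each statement's English description precedes it below -/
import Mathlib

section
/- Let (M,·) be a semigroup and let X ⊆ M be an IP set. Then for every Y ⊆ X, either Y or X∖Y is an IP set. (Partition regularity of IP sets; Hindman's theorem for semigroups.) -/
open Filter FirstOrder FirstOrder.Language

attribute [local instance] Ultrafilter.mul

/-! ## Combinatorial notions in a semigroup -/

/-- `X` is an IP set: it contains `FP u` (all finite products, in increasing order of indices,
of distinct terms) of some sequence `u`. -/
def IsIP {M : Type*} [Semigroup M] (X : Set M) : Prop :=
  ∃ u : Stream' M, Hindman.FP u ⊆ X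

/-- `X` is IIP (infinitely IP): it contains an infinite set of the form `FP u`. -/
def IsIIP {M : Type*} [Semigroup M] (X : Set M) : Prop :=
  ∃ u : Stream' M, Hindman.FP u ⊆ X ∧ (Hindman.FP u).Infinite

/-- `X` is DIP (distinctly IP): it contains `FP u` for an injective sequence `u`. -/
def IsDIP {M : Type*} [Semigroup M] (X : Set M) : Prop :=
  ∃ u : Stream' M, Function.Injective u ∧ Hindman.FP u ⊆ X

/-- An ultrafilter is nonprincipal if it is not of the form `{A | a ∈ A}` for any `a`. -/
def Ultrafilter.Nonprincipal {M : Type*} (U : Ultrafilter M) : Prop :=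
  ∀ a : M, U ≠ pure a

/-- A semigroup is moving if the product of two nonprincipal ultrafilters
(for the ultrafilter product `A ∈ U * V ↔ {m | {n | m * n ∈ A} ∈ V} ∈ U`) is nonprincipal. -/
def IsMoving (M : Type*) [Semigroup M] : Prop :=
  ∀ U V : Ultrafilter M, U.Nonprincipal → V.Nonprincipal → (U * V).Nonprincipal

/-! ## Types over a semigroup structure -/

/-- Formulas in one free variable, with parameters from `M`. -/
abbrev Form1 (L : Language) (M : Type*) := L.Formula (M ⊕ Fin 1)

/-- Formulas in two free variables (`x` and `y`), with parameters from `M`. -/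
abbrev Form2 (L : Language) (M : Type*) := L.Formula (M ⊕ Fin 2)

/-- Realization of a 1-variable formula with parameters at the point `a`. -/
def Realize1 {L : Language} {M : Type*} (S : L.Structure M) (φ : Form1 L M) (a : M) : Prop :=
  @Formula.Realize L M S _ φ (Sum.elim id fun _ => a)

/-- Realization of a 2-variable formula with parameters at the pair `(a, b)`. -/
def Realize2 {L : Language} {M : Type*} (S : L.Structure M) (φ : Form2 L M) (a b : M) : Prop :=
  @Formula.Realize L M S _ φ (Sum.elim id ![a, b])

/-- A complete 1-type over the structure `S` (with parameters for all elements of `M`):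
a complete, finitely satisfiable (in `S`) set of formulas in one free variable. -/
def IsCompleteType1 {L : Language} {M : Type*} (S : L.Structure M)
    (p : Set (Form1 L M)) : Prop :=
  (∀ φ : Form1 L M, φ ∈ p ↔ φ.not ∉ p) ∧
    ∀ s : Finset (Form1 L M), ↑s ⊆ p → ∃ a : M, ∀ φ ∈ s, Realize1 S φ a

/-- A complete 2-type over the structure `S` (with parameters for all elements of `M`). -/
def IsCompleteType2 {L : Language} {M : Type*} (S : L.Structure M)
    (q : Set (Form2 L M)) : Prop :=
  (∀ φ : Form2 L M, φ ∈ q ↔ φ.not ∉ q) ∧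
    ∀ s : Finset (Form2 L M), ↑s ⊆ q → ∃ a b : M, ∀ φ ∈ s, Realize2 S φ a b

/-- `substX u φ` is `φ(u, y)`: the element `u` is substituted for the variable `x`. -/
def substX {L : Language} {M : Type*} (u : M) (φ : Form2 L M) : Form2 L M :=
  φ.subst (Sum.elim (fun m => Term.var (Sum.inl m))
    ![Term.var (Sum.inl u), Term.var (Sum.inr 1)])

/-- A 2-type `q(x, y)` is independent if for every `φ(x, y) ∈ q` there is `u ∈ M` with
`φ(u, y) ∈ q`. -/
def IsIndependent {L : Language} {M : Type*} (q : Set (Form2 L M)) : Prop :=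
  ∀ φ ∈ q, ∃ u : M, substX u φ ∈ q

/-- `toX φ` views the 1-variable formula `φ` as a 2-variable formula `φ(x)`. -/
def toX {L : Language} {M : Type*} (φ : Form1 L M) : Form2 L M :=
  φ.subst (Sum.elim (fun m => Term.var (Sum.inl m)) fun _ => Term.var (Sum.inr 0))

/-- `toY φ` views the 1-variable formula `φ` as a 2-variable formula `φ(y)`. -/
def toY {L : Language} {M : Type*} (φ : Form1 L M) : Form2 L M :=
  φ.subst (Sum.elim (fun m => Term.var (Sum.inl m)) fun _ => Term.var (Sum.inr 1))

/-- `toXY f φ` is `φ(x · y)`, where `f` is the distinguished binary function symbol. -/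
def toXY {L : Language} {M : Type*} (f : L.Functions 2) (φ : Form1 L M) : Form2 L M :=
  φ.subst (Sum.elim (fun m => Term.var (Sum.inl m))
    fun _ => Term.func f ![Term.var (Sum.inr 0), Term.var (Sum.inr 1)])

/-- A complete 1-type `p` over `S` is idempotent (with respect to the binary function symbol `f`
interpreted as the semigroup operation) if there is an independent complete 2-type `q(x, y)` with
`p(x) ⊆ q`, `p(y) ⊆ q` and `p(x · y) ⊆ q`. -/
def IsIdempotentType {L : Language} {M : Type*} (S : L.Structure M) (f : L.Functions 2)
    (p : Set (Form1 L M)) : Prop :=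
  IsCompleteType1 S p ∧
    ∃ q : Set (Form2 L M), IsCompleteType2 S q ∧ IsIndependent q ∧
      (∀ φ ∈ p, toX φ ∈ q) ∧ (∀ φ ∈ p, toY φ ∈ q) ∧ (∀ φ ∈ p, toXY f φ ∈ q)

/-- A 1-type over `S` is principal if it is realized by an element of `M`. -/
def IsPrincipalType {L : Language} {M : Type*} (S : L.Structure M)
    (p : Set (Form1 L M)) : Prop :=
  ∃ a : M, ∀ φ ∈ p, Realize1 S φ a

/-- Hindman's theorem for semigroups: if `X` is an IP set and `Y ⊆ X`, then
`Y` or `X \ Y` is an IP set. -/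
theorem hindman_IP_partition_regular {M : Type*} [Semigroup M] (X : Set M) (hX : IsIP X)
    (Y : Set M) (hYX : Y ⊆ X) : IsIP Y ∨ IsIP (X \ Y) := by
  obtain ⟨u, hu⟩ := hX
  obtain ⟨c, hc, b, hb⟩ := Hindman.FP_partition_regular u {Y, X \ Y}
    ((Set.finite_singleton _).insert _)
    (fun m hm => by
      rcases Classical.em (m ∈ Y) with h | h
      · exact ⟨Y, Or.inl rfl, h⟩
      · exact ⟨X \ Y, Or.inr rfl, hu hm, h⟩)
  rcases hc with rfl | rfl
  · exact Or.inl ⟨b, hb⟩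
  · exact Or.inr ⟨b, hb⟩
end

section
/- Let (M,·) be a countable semigroup in which IP sets are partition regular (i.e., for every IP set X ⊆ M and Y ⊆ X, either Y or X∖Y is IP). Let 𝓜 = (M,·,…) be a semigroup structure based on (M,·) in a countable language, and let X ⊆ M be an 𝓜-definable IP set. Then there exists an idempotent complete 1-type over 𝓜 containing the formula defining X. -/
open Filter FirstOrder FirstOrder.Language

attribute [local instance] Ultrafilter.mul

/-! ## Auxiliary realization lemmas -/

section Aux

variable {L : Language} {M : Type*} (S : L.Structure M)

lemma realize1_not (ψ : Form1 L M) (a : M) :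
    Realize1 S ψ.not a ↔ ¬ Realize1 S ψ a := by
  simp [Realize1, Formula.not]

lemma realize2_not (ψ : Form2 L M) (a b : M) :
    Realize2 S ψ.not a b ↔ ¬ Realize2 S ψ a b := by
  simp [Realize2, Formula.not]

lemma realize_substX (u : M) (ψ : Form2 L M) (a b : M) :
    Realize2 S (substX u ψ) a b ↔ Realize2 S ψ u b := by
  simp only [Realize2, substX, Formula.Realize, BoundedFormula.realize_subst]
  apply iff_of_eq; congr 1
  funext i
  rcases i with m | i
  · rfl
  · fin_cases i <;> rfl

lemma realize_toX (ψ : Form1 L M) (a b : M) :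
    Realize2 S (toX ψ) a b ↔ Realize1 S ψ a := by
  simp only [Realize1, Realize2, toX, Formula.Realize, BoundedFormula.realize_subst]
  apply iff_of_eq; congr 1
  funext i
  rcases i with m | i <;> rfl

lemma realize_toY (ψ : Form1 L M) (a b : M) :
    Realize2 S (toY ψ) a b ↔ Realize1 S ψ b := by
  simp only [Realize1, Realize2, toY, Formula.Realize, BoundedFormula.realize_subst]
  apply iff_of_eq; congr 1
  funext i
  rcases i with m | i <;> rfl

lemma realize_toXY [Semigroup M] (f : L.Functions 2)
    (hf : ∀ x y : M, S.funMap f ![x, y] = x * y) (ψ : Form1 L M) (a b : M) :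
    Realize2 S (toXY f ψ) a b ↔ Realize1 S ψ (a * b) := by
  simp only [Realize1, Realize2, toXY, Formula.Realize, BoundedFormula.realize_subst]
  apply iff_of_eq; congr 1
  funext i
  rcases i with m | i
  · rfl
  · show S.funMap f _ = a * b
    rw [← hf a b]
    congr 1
    funext j
    fin_cases j <;> rfl

end Aux

/-- if IP sets in the countable semigroup `M` are partition regular, then for
every semigroup structure based on `(M, ·)` in a countable language and every definable IP set
there is an idempotent complete 1-type containing the formula defining it. -/
theorem exists_idempotent_type_of_hindman {M : Type*} [Semigroup M] [Countable M]
    (hH : ∀ X : Set M, IsIP X → ∀ Y : Set M, Y ⊆ X → IsIP Y ∨ IsIP (X \ Y))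
    (L : Language) (hL : Countable L.Symbols) (f : L.Functions 2) (S : L.Structure M)
    (hf : ∀ x y : M, S.funMap f ![x, y] = x * y)
    (φ : Form1 L M) (hφ : IsIP {a : M | Realize1 S φ a}) :
    ∃ p : Set (Form1 L M), φ ∈ p ∧ IsIdempotentType S f p := by
  classical
  obtain ⟨u, hu⟩ := hφ
  obtain ⟨U, hUU, hUFP⟩ := Hindman.exists_idempotent_ultrafilter_le_FP u
  set p : Set (Form1 L M) := {ψ | ∀ᶠ a in (U : Filter M), Realize1 S ψ a} with hp
  set q : Set (Form2 L M) :=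
    {ψ | ∀ᶠ a in (U : Filter M), ∀ᶠ b in (U : Filter M), Realize2 S ψ a b} with hq
  have hpq : ∀ ψ : Form2 L M,
      ψ ∈ q ↔ ∀ᶠ a in (U : Filter M), ∀ᶠ b in (U : Filter M), Realize2 S ψ a b := fun _ => Iff.rfl
  refine ⟨p, ?_, ?_, q, ?_, ?_, ?_, ?_, ?_⟩
  · exact Filter.Eventually.mono hUFP fun a ha => hu ha
  · constructor
    · intro ψ
      constructor
      · intro hψ hcon
        obtain ⟨a, ha1, ha2⟩ := (hψ.and hcon).exists
        exact (realize1_not S ψ a).mp ha2 ha1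
      · intro hcon
        by_contra hψ
        apply hcon
        have := (Ultrafilter.eventually_not (f := U)).mpr hψ
        exact this.mono fun a ha => (realize1_not S ψ a).mpr ha
    · intro s hs
      have : ∀ᶠ a in (U : Filter M), ∀ ψ ∈ s, Realize1 S ψ a := by
        apply (Filter.eventually_all_finset s).mpr
        intro ψ hψ
        exact hs hψ
      exact this.exists
  · constructor
    · intro ψ
      constructor
      · intro hψ hcon
        have hcon' : ∀ᶠ a in (U : Filter M), ∀ᶠ b in (U : Filter M), ¬ Realize2 S ψ a b :=
          hcon.mono fun a ha => ha.mono fun b hb => (realize2_not S ψ a b).mp hb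
        obtain ⟨a, ha1, ha2⟩ := (hψ.and hcon').exists
        obtain ⟨b, hb1, hb2⟩ := (ha1.and ha2).exists
        exact hb2 hb1
      · intro hcon
        by_contra hψ
        apply hcon
        have h1 : ∀ᶠ a in (U : Filter M), ¬ ∀ᶠ b in (U : Filter M), Realize2 S ψ a b :=
          (Ultrafilter.eventually_not (f := U)).mpr hψ
        refine h1.mono fun a ha => ?_
        have h2 : ∀ᶠ b in (U : Filter M), ¬ Realize2 S ψ a b :=
          (Ultrafilter.eventually_not (f := U)).mpr ha
        exact h2.mono fun b hb => (realize2_not S ψ a b).mpr hb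
    · intro s hs
      have h1 : ∀ᶠ a in (U : Filter M), ∀ ψ ∈ s, ∀ᶠ b in (U : Filter M), Realize2 S ψ a b := by
        apply (Filter.eventually_all_finset s).mpr
        intro ψ hψ
        exact hs hψ
      obtain ⟨a, ha⟩ := h1.exists
      have h2 : ∀ᶠ b in (U : Filter M), ∀ ψ ∈ s, Realize2 S ψ a b := by
        apply (Filter.eventually_all_finset s).mpr
        intro ψ hψ
        exact ha ψ hψ
      obtain ⟨b, hb⟩ := h2.exists
      exact ⟨a, b, hb⟩
  · intro ψ hψ
    obtain ⟨v, hv⟩ := ((hpq ψ).mp hψ).exists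
    refine ⟨v, (hpq _).mpr ?_⟩
    apply Filter.Eventually.of_forall
    intro a
    exact hv.mono fun b hb => (realize_substX S v ψ a b).mpr hb
  · intro ψ hψ
    refine (hpq _).mpr (Filter.Eventually.mono hψ fun a ha => ?_)
    exact Filter.Eventually.of_forall fun b => (realize_toX S ψ a b).mpr ha
  · intro ψ hψ
    refine (hpq _).mpr (Filter.Eventually.of_forall fun a => ?_)
    exact hψ.mono fun b hb => (realize_toY S ψ a b).mpr hb
  · intro ψ hψ
    refine (hpq _).mpr ?_
    have : ∀ᶠ m in ((U * U : Ultrafilter M) : Filter M), Realize1 S ψ m := by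
      rw [hUU]; exact hψ
    rw [Ultrafilter.eventually_mul] at this
    exact this.mono fun a ha => ha.mono fun b hb => (realize_toXY S f hf ψ a b).mpr hb
end

section
/- Let (M,·) be a moving semigroup and let A ⊆ M. Then A is DIP if and only if there exists a nonprincipal idempotent ultrafilter 𝓤 on M with A ∈ 𝓤. -/
open Filter FirstOrder FirstOrder.Language

attribute [local instance] Ultrafilter.mul

/-!
A DIP set `A ⊇ FP u` is handled as in Hindman's theorem: the ultrafilters containing every tail
`FP (u.drop n)` form a closed subsemigroup of `βM`. Injectivity of `u` makes it meet the closed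
set of nonprincipal ultrafilters, and in a moving semigroup that intersection is again a
subsemigroup, so Ellis–Numakura yields a nonprincipal idempotent containing `A`. Conversely, the
Galvin–Glazer construction inside a nonprincipal idempotent can discard each chosen term from
all later choices, which makes the resulting sequence injective.
-/

namespace Ultrafilter

variable {M : Type*}

theorem nonprincipal_iff_compl_singleton_mem {U : Ultrafilter M} :
    U.Nonprincipal ↔ ∀ a : M, ({a}ᶜ : Set M) ∈ U := by
  refine forall_congr' fun a => ?_
  rw [compl_mem_iff_notMem, not_iff_not]
  exact ⟨fun h => h ▸ mem_pure.2 rfl, fun h =>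
    (eq_pure_of_finite_mem (Set.finite_singleton a) h).elim fun _ ⟨hx, hU⟩ => hx ▸ hU⟩

theorem nonprincipal_of_le_cofinite {U : Ultrafilter M} (hU : (U : Filter M) ≤ cofinite) :
    U.Nonprincipal :=
  nonprincipal_iff_compl_singleton_mem.2 fun a => hU (Set.finite_singleton a).compl_mem_cofinite

theorem isClosed_setOf_nonprincipal : IsClosed {U : Ultrafilter M | U.Nonprincipal} := by
  simp_rw [nonprincipal_iff_compl_singleton_mem, Set.ofPred_forall]
  exact isClosed_iInter fun a => ultrafilter_isClosed_basic _

end Ultrafilter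

namespace Hindman

variable {M : Type*} [Semigroup M]

theorem FP_drop_mem_mul {a : Stream' M} {U V : Ultrafilter M}
    (hU : ∀ n, FP (a.drop n) ∈ U) (hV : ∀ n, FP (a.drop n) ∈ V) (n : ℕ) :
    FP (a.drop n) ∈ U * V := by
  change ∀ᶠ m in (U * V : Ultrafilter M), m ∈ FP (a.drop n)
  rw [Ultrafilter.eventually_mul]
  filter_upwards [hU n] with m hm
  obtain ⟨k, hk⟩ := FP.mul hm
  filter_upwards [hV (n + k)] with m' hm'
  exact hk m' (by rwa [Stream'.drop_drop])

theorem FP_drop_subset_of_mem {S : ℕ → Set M} {u : Stream' M} (hmem : ∀ n, u.get n ∈ S n)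
    (hsub : ∀ n, S (n + 1) ⊆ S n) (hmul : ∀ n, S (n + 1) ⊆ (u.get n * ·) ⁻¹' S n) (n : ℕ) :
    FP (u.drop n) ⊆ S n := by
  have drop_tail : ∀ n, (u.drop n).tail = u.drop (n + 1) := fun n => by
    rw [Stream'.tail_eq_drop, Stream'.drop_drop, Nat.add_comm]
  suffices ∀ b, ∀ m ∈ FP b, ∀ n, b = u.drop n → m ∈ S n from
    fun m hm => this _ m hm n rfl
  intro b m hm
  induction hm with
  | head' b =>
    rintro n rfl
    simpa only [Stream'.head_drop] using hmem n
  | tail' b m _ ih =>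
    rintro n rfl
    exact hsub n (ih (n + 1) (drop_tail n))
  | cons' b m _ ih =>
    rintro n rfl
    simpa only [Stream'.head_drop, Set.mem_preimage] using hmul n (ih (n + 1) (drop_tail n))

end Hindman

theorem Function.injective_of_mem_of_notMem_succ {α : Type*} {S : ℕ → Set α} {u : ℕ → α}
    (hS : Antitone S) (hmem : ∀ n, u n ∈ S n) (hnotMem : ∀ n, u n ∉ S (n + 1)) :
    Function.Injective u :=
  Function.Injective.of_lt_imp_ne fun n m hnm heq =>
    hnotMem n (heq ▸ hS (Nat.succ_le_of_lt hnm) (hmem m))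

section Idempotent

variable {M : Type*} [Semigroup M] {U : Ultrafilter M}

theorem Ultrafilter.exists_mem_subset_preimage_mul_notMem (hnp : U.Nonprincipal) (hU : U * U = U)
    {s : Set M} (hs : s ∈ U) :
    ∃ a ∈ s, ∃ t ∈ U, t ⊆ s ∧ t ⊆ (a * ·) ⁻¹' s ∧ a ∉ t := by
  have hlarge : {a | (a * ·) ⁻¹' s ∈ U} ∈ U := by rwa [← hU] at hs
  obtain ⟨a, has, hat⟩ := Ultrafilter.nonempty_of_mem (inter_mem hs hlarge)
  refine ⟨a, has, s ∩ (a * ·) ⁻¹' s ∩ {a}ᶜ,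
    inter_mem (inter_mem hs hat) (nonprincipal_iff_compl_singleton_mem.1 hnp a), ?_, ?_, ?_⟩
  · exact Set.inter_subset_left.trans Set.inter_subset_left
  · exact Set.inter_subset_left.trans Set.inter_subset_right
  · exact fun h => h.2 rfl

theorem Ultrafilter.Nonprincipal.isDIP_of_mem (hnp : U.Nonprincipal) (hU : U * U = U)
    {A : Set M} (hA : A ∈ U) : IsDIP A := by
  choose pick hpick next hnext using fun s : {s // s ∈ U} =>
    U.exists_mem_subset_preimage_mul_notMem hnp hU s.2
  let S : ℕ → {s // s ∈ U} := fun n => (fun s => ⟨next s, (hnext s).1⟩)^[n] ⟨A, hA⟩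
  have hS : ∀ n, (S (n + 1)).1 = next (S n) := fun n =>
    congrArg Subtype.val (Function.iterate_succ_apply' _ n _)
  let u : Stream' M := fun n => pick (S n)
  have hsub : ∀ n, (S (n + 1)).1 ⊆ S n := fun n => hS n ▸ (hnext (S n)).2.1
  refine ⟨u, Function.injective_of_mem_of_notMem_succ (S := fun n => (S n).1)
      (antitone_nat_of_succ_le hsub) (fun n => hpick (S n)) fun n => hS n ▸ (hnext (S n)).2.2.2,
    Hindman.FP_drop_subset_of_mem (fun n => hpick (S n)) hsub
      (fun n => hS n ▸ (hnext (S n)).2.2.1) 0⟩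

end Idempotent

theorem exists_nonprincipal_forall_FP_drop_mem {M : Type*} [Semigroup M] {u : Stream' M}
    (hu : Function.Injective u) :
    ∃ U : Ultrafilter M, U.Nonprincipal ∧ ∀ n, Hindman.FP (u.drop n) ∈ U := by
  have : (map u.get cofinite).NeBot := cofinite_neBot.map _
  have hle : (Ultrafilter.of (map u.get cofinite) : Filter M) ≤ map u.get cofinite :=
    Ultrafilter.of_le _
  refine ⟨_, Ultrafilter.nonprincipal_of_le_cofinite (hle.trans hu.tendsto_cofinite), fun n => ?_⟩
  apply hle
  rw [mem_map, Nat.cofinite_eq_atTop, mem_atTop_sets]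
  refine ⟨n, fun k hk => ?_⟩
  have hget : (u.drop n).get (k - n) = u.get k := by rw [Stream'.get_drop, Nat.add_sub_of_le hk]
  exact show u.get k ∈ _ from hget ▸ Hindman.FP.singleton _ _

theorem IsMoving.exists_nonprincipal_idempotent_FP_mem {M : Type*} [Semigroup M]
    (hM : IsMoving M) {u : Stream' M} (hu : Function.Injective u) :
    ∃ U : Ultrafilter M, U.Nonprincipal ∧ U * U = U ∧ Hindman.FP u ∈ U := by
  let _ : Semigroup (Ultrafilter M) := Ultrafilter.semigroup
  let S : Set (Ultrafilter M) :=
    {U | U.Nonprincipal} ∩ ⋂ n, {U | Hindman.FP (u.drop n) ∈ U}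
  have hclosed : IsClosed S := Ultrafilter.isClosed_setOf_nonprincipal.inter <|
    isClosed_iInter fun n => ultrafilter_isClosed_basic _
  have hmul : ∀ U ∈ S, ∀ V ∈ S, U * V ∈ S := fun U hU V hV =>
    ⟨hM U V hU.1 hV.1, Set.mem_iInter.2 <| Hindman.FP_drop_mem_mul
      (Set.mem_iInter.1 hU.2) (Set.mem_iInter.1 hV.2)⟩
  obtain ⟨U₀, hU₀, hFP⟩ := exists_nonprincipal_forall_FP_drop_mem hu
  obtain ⟨U, hUS, hUU⟩ := exists_idempotent_in_compact_subsemigroup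
    Ultrafilter.continuous_mul_left S ⟨U₀, hU₀, Set.mem_iInter.2 hFP⟩ hclosed.isCompact hmul
  exact ⟨U, hUS.1, hUU, Set.mem_iInter.1 hUS.2 0⟩

/-- in a moving semigroup, `A` is DIP iff `A` belongs to some nonprincipal
idempotent ultrafilter. -/
theorem isDIP_iff_mem_nonprincipal_idempotent {M : Type*} [Semigroup M] (hM : IsMoving M)
    (A : Set M) :
    IsDIP A ↔ ∃ U : Ultrafilter M, U.Nonprincipal ∧ U * U = U ∧ A ∈ U := by
  constructor
  · rintro ⟨u, hu, huA⟩
    obtain ⟨U, hnp, hUU, hFP⟩ := hM.exists_nonprincipal_idempotent_FP_mem hu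
    exact ⟨U, hnp, hUU, mem_of_superset hFP huA⟩
  · rintro ⟨U, hnp, hUU, hA⟩
    exact hnp.isDIP_of_mem hUU hA
end

section
/- Every moving semigroup is Hindman: if (M,·) is a semigroup in which the product of two nonprincipal ultrafilters is nonprincipal, then the collection of IIP subsets of M is partition regular, i.e., if A ⊆ M is IIP and A = Y ∪ Z, then Y or Z is IIP. -/
open Filter FirstOrder FirstOrder.Language

attribute [local instance] Ultrafilter.mul

/-!
`FP u` belongs to every ultrafilter in the set `S` of nonprincipal ultrafilters containing all
the tails `FP (u.drop n)`. Since `FP u` is infinite, `S` is nonempty; it is closed in `βM`, and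
it is a subsemigroup: tails are absorbed under multiplication, and the moving hypothesis keeps
products nonprincipal. By Ellis–Numakura `S` contains an idempotent `U`, and `Y` or `Z` lies in
`U`. The Galvin–Glazer construction inside that part, which may also avoid every term already
chosen because `U` is nonprincipal, gives an injective sequence, hence an infinite FP-set.
-/

attribute [local instance] Ultrafilter.semigroup

theorem Ultrafilter.nonprincipal_iff_le_cofinite {α : Type*} (U : Ultrafilter α) :
    U.Nonprincipal ↔ (U : Filter α) ≤ cofinite := by
  refine ⟨fun h => U.le_cofinite_or_eq_pure.resolve_right fun ⟨a, ha⟩ => h a ha, ?_⟩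
  rintro h a rfl
  simpa using h (Set.finite_singleton a).compl_mem_cofinite

theorem mul_le_cofinite_of_isMoving {M : Type*} [Semigroup M] (hM : IsMoving M)
    {U V : Ultrafilter M} (hU : (U : Filter M) ≤ cofinite) (hV : (V : Filter M) ≤ cofinite) :
    ((U * V : Ultrafilter M) : Filter M) ≤ cofinite :=
  (U * V).nonprincipal_iff_le_cofinite.mp
    (hM U V (U.nonprincipal_iff_le_cofinite.mpr hU) (V.nonprincipal_iff_le_cofinite.mpr hV))

theorem Ultrafilter.isClosed_setOf_le {α : Type*} (f : Filter α) :
    IsClosed {U : Ultrafilter α | (U : Filter α) ≤ f} := by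
  have : {U : Ultrafilter α | (U : Filter α) ≤ f} = ⋂ s ∈ f, {U | s ∈ U} := by
    ext U
    simp [Filter.le_def]
  rw [this]
  exact isClosed_biInter fun s _ => ultrafilter_isClosed_basic s

theorem Ultrafilter.exists_mem_preimage_mul_left_mem {M : Type*} [Semigroup M]
    {U : Ultrafilter M} (hU : U * U = U) {s : Set M} (hs : s ∈ U) :
    ∃ m ∈ s, (m * ·) ⁻¹' s ∈ U :=
  Ultrafilter.nonempty_of_mem (inter_mem hs (by rwa [← hU] at hs))

namespace Hindman

section Iterate

variable {σ M : Type*} (elem : σ → M) (succ : σ → σ) (set : σ → Set M)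

theorem FP_iterate_subset [Semigroup M] (h_mem : ∀ p, elem p ∈ set p)
    (h_succ : ∀ p, set (succ p) ⊆ set p) (h_mul : ∀ p, ∀ m ∈ set (succ p), elem p * m ∈ set p)
    (p : σ) : FP (fun n => elem (succ^[n] p) : Stream' M) ⊆ set p := by
  suffices ∀ a m, m ∈ FP a → ∀ p, a = (fun n => elem (succ^[n] p)) → m ∈ set p from
    fun m hm => this _ m hm p rfl
  intro a m hm
  induction hm with
  | head' => rintro p rfl; exact h_mem p
  | tail' a m _ ih => rintro p rfl; exact h_succ p (ih (succ p) rfl)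
  | cons' a m _ ih => rintro p rfl; exact h_mul p m (ih (succ p) rfl)

theorem injective_iterate_apply (h_mem : ∀ p, elem p ∈ set p)
    (h_succ : ∀ p, set (succ p) ⊆ set p) (h_not_mem : ∀ p, elem p ∉ set (succ p)) (p : σ) :
    Function.Injective fun n => elem (succ^[n] p) := by
  have h_iterate : ∀ k q, set (succ^[k] q) ⊆ set q := by
    intro k
    induction k with
    | zero => exact fun q => subset_rfl
    | succ k ih => exact fun q => (ih (succ q)).trans (h_succ q)
  refine Function.Injective.of_lt_imp_ne fun i j hij heq => ?_
  obtain ⟨k, rfl⟩ := Nat.exists_eq_add_of_lt hij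
  apply h_not_mem (succ^[i] p)
  rw [heq, show i + k + 1 = k + (i + 1) by omega, Function.iterate_add_apply,
    Function.iterate_succ_apply']
  exact h_iterate k _ (h_mem _)

end Iterate

variable {M : Type*} [Semigroup M]

theorem FP_subset_insert_head (a : Stream' M) :
    FP a ⊆ insert a.head ((a.head * ·) '' FP a.tail ∪ FP a.tail) := by
  intro m hm
  cases hm with
  | head' => exact Set.mem_insert _ _
  | tail' _ _ h => exact Set.mem_insert_of_mem _ (Or.inr h)
  | cons' _ _ h => exact Set.mem_insert_of_mem _ (Or.inl ⟨_, h, rfl⟩)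

theorem infinite_FP_drop {a : Stream' M} (h : (FP a).Infinite) (n : ℕ) :
    (FP (a.drop n)).Infinite := by
  induction n with
  | zero => exact h
  | succ n ih =>
    intro hfin
    rw [← Stream'.tail_drop'] at hfin
    exact ih (((hfin.image _).union hfin).insert _ |>.subset (FP_subset_insert_head _))

theorem antitone_FP_drop (a : Stream' M) : Antitone fun n => FP (a.drop n) :=
  antitone_nat_of_succ_le fun n => by
    rw [← Stream'.tail_drop']
    exact FP.tail _

def FPTails (a : Stream' M) : Filter M :=
  ⨅ n, 𝓟 (FP (a.drop n))

theorem le_FPTails_iff {a : Stream' M} {f : Filter M} :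
    f ≤ FPTails a ↔ ∀ n, FP (a.drop n) ∈ f := by
  simp [FPTails]

theorem FP_mem_FPTails (a : Stream' M) : FP a ∈ FPTails a :=
  mem_iInf_of_mem 0 (mem_principal_self _)

theorem mul_le_FPTails {a : Stream' M} {U V : Ultrafilter M} (hU : ↑U ≤ FPTails a)
    (hV : ↑V ≤ FPTails a) : ↑(U * V) ≤ FPTails a := by
  rw [le_FPTails_iff] at *
  intro n
  show ∀ᶠ m in U, ∀ᶠ m' in V, m * m' ∈ FP (a.drop n)
  filter_upwards [hU n] with m hm
  obtain ⟨n', hn'⟩ := FP.mul hm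
  filter_upwards [hV (n' + n)] with m' hm'
  exact hn' _ (by rwa [Stream'.drop_drop, add_comm])

theorem neBot_cofinite_inf_FPTails {a : Stream' M} (h : (FP a).Infinite) :
    (cofinite ⊓ FPTails a).NeBot := by
  rw [FPTails, inf_iInf]
  refine iInf_neBot_of_directed' (Antitone.directed_ge fun m n hmn => ?_) fun n =>
    (infinite_FP_drop h n).cofinite_inf_principal_neBot
  exact inf_le_inf_left _ (principal_mono.mpr (antitone_FP_drop a hmn))

end Hindman

open Hindman

theorem exists_idempotent_le_cofinite_inf_FPTails_of_isMoving {M : Type*} [Semigroup M]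
    (hM : IsMoving M) {a : Stream' M} (h : (FP a).Infinite) :
    ∃ U : Ultrafilter M, U * U = U ∧ ↑U ≤ cofinite ⊓ FPTails a := by
  have := neBot_cofinite_inf_FPTails h
  obtain ⟨U, hU, hUU⟩ := exists_idempotent_in_compact_subsemigroup Ultrafilter.continuous_mul_left
    {U : Ultrafilter M | ↑U ≤ cofinite ⊓ FPTails a} ⟨Ultrafilter.of _, Ultrafilter.of_le _⟩
    (Ultrafilter.isClosed_setOf_le _).isCompact fun U hU V hV =>
      le_inf (mul_le_cofinite_of_isMoving hM (le_inf_iff.mp hU).1 (le_inf_iff.mp hV).1)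
        (mul_le_FPTails (le_inf_iff.mp hU).2 (le_inf_iff.mp hV).2)
  exact ⟨U, hUU, hU⟩

theorem isDIP_of_mem_idempotent {M : Type*} [Semigroup M] {U : Ultrafilter M} (hU : U * U = U)
    (hcof : (U : Filter M) ≤ cofinite) {s : Set M} (hs : s ∈ U) : IsDIP s := by
  choose elem elem_mem elem_mul using fun t : {t // t ∈ U} =>
    Ultrafilter.exists_mem_preimage_mul_left_mem hU t.2
  -- Nonprincipality lets the next large set also omit `elem t`; this makes the sequence injective.
  let succ : {t // t ∈ U} → {t // t ∈ U} := fun t =>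
    ⟨t.1 ∩ (elem t * ·) ⁻¹' t.1 ∩ {elem t}ᶜ,
      inter_mem (inter_mem t.2 (elem_mul t)) (hcof (Set.finite_singleton _).compl_mem_cofinite)⟩
  have h_succ : ∀ t, (succ t).1 ⊆ t.1 := fun t m hm => hm.1.1
  exact ⟨_, injective_iterate_apply elem succ Subtype.val elem_mem h_succ (fun t h => h.2 rfl)
      ⟨s, hs⟩,
    FP_iterate_subset elem succ Subtype.val elem_mem h_succ (fun t m hm => hm.1.2) ⟨s, hs⟩⟩

theorem IsDIP.isIIP {M : Type*} [Semigroup M] {s : Set M} (h : IsDIP s) : IsIIP s := by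
  obtain ⟨u, hinj, hu⟩ := h
  refine ⟨u, hu, (Set.infinite_range_of_injective hinj).mono ?_⟩
  rintro _ ⟨i, rfl⟩
  exact FP.singleton u i

/-- every moving semigroup is Hindman, i.e. its IIP sets are partition
regular. -/
theorem isIIP_partition_regular_of_moving {M : Type*} [Semigroup M] (hM : IsMoving M)
    (A Y Z : Set M) (hA : IsIIP A) (hYZ : A = Y ∪ Z) : IsIIP Y ∨ IsIIP Z := by
  obtain ⟨u, huA, hinf⟩ := hA
  obtain ⟨U, hU_idem, hU_le⟩ := exists_idempotent_le_cofinite_inf_FPTails_of_isMoving hM hinf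
  have hU_cof : (U : Filter M) ≤ cofinite := hU_le.trans inf_le_left
  have hYZ_mem : Y ∪ Z ∈ U :=
    hYZ ▸ mem_of_superset (hU_le.trans inf_le_right (FP_mem_FPTails u)) huA
  rcases Ultrafilter.union_mem_iff.mp hYZ_mem with hY | hZ
  · exact Or.inl (isDIP_of_mem_idempotent hU_idem hU_cof hY).isIIP
  · exact Or.inr (isDIP_of_mem_idempotent hU_idem hU_cof hZ).isIIP
end
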